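/- arXiv:1909.08874 — 4 statements merged into one kernel-verified Lean document; each statement's English description precedes it below -/
import Mathlib

section
/- Let x, y ∈ ℂ^d be linearly independent, and suppose z z* - w w* = λ x x* - μ y y* for some z, w ∈ ℂ^d and real numbers λ, μ ≥ 0 not both zero. Then z and w both lie in the linear span of {x, y}. -/
/-!
Let `c` be a row vector with `c x = c y = 0`. Multiplying both sides by `c` on the left gives
`(c z) z* = (c w) w*`, and pairing this with `c*` shows `|c z| = |c w|`. If `c z ≠ 0`, then
`z z* = w w*`, so `λ x x* = μ y y*`; applied to `x` and to `y` this forces `λ = μ = 0` by the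
independence of `x, y`. Hence every functional vanishing on `span {x, y}` vanishes on `z`, and
symmetrically on `w`.
-/

open Submodule

namespace Matrix

theorem mem_span_of_forall_dotProduct_eq_zero {K n : Type*} [Field K] [Fintype n]
    [DecidableEq n] {s : Set (n → K)} {v : n → K}
    (h : ∀ c : n → K, (∀ a ∈ s, c ⬝ᵥ a = 0) → c ⬝ᵥ v = 0) :
    v ∈ span K s := by
  by_contra hv
  obtain ⟨f, hfv, hsf⟩ := exists_le_ker_of_notMem hv
  obtain ⟨c, rfl⟩ := (dotProductEquiv K n).surjective f
  exact hfv (h c fun a ha => hsf (subset_span ha))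

variable {R n : Type*} [Field R] [StarRing R]

theorem vecMulVec_star_eq_of_smul_star_eq {z w : n → R} {α β : R} (hα : α ≠ 0)
    (h : α • star z = β • star w) (hαβ : star α * α = star β * β) :
    vecMulVec z (star z) = vecMulVec w (star w) := by
  have hstar : star α • z = star β • w := by simpa [star_smul] using congrArg star h
  have hscaled :
      (star α * α) • vecMulVec z (star z) = (star β * β) • vecMulVec w (star w) :=
    calc (star α * α) • vecMulVec z (star z) = vecMulVec (star α • z) (α • star z) := by
          rw [smul_vecMulVec, vecMulVec_smul, smul_smul]
      _ = vecMulVec (star β • w) (β • star w) := by rw [h, hstar]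
      _ = (star β * β) • vecMulVec w (star w) := by
          rw [smul_vecMulVec, vecMulVec_smul, smul_smul]
  rwa [hαβ, smul_right_inj (hαβ ▸ mul_ne_zero (star_ne_zero.mpr hα) hα)] at hscaled

variable [PartialOrder R] [StarOrderedRing R] [Fintype n]

theorem eq_zero_of_smul_vecMulVec_star_eq {x y : n → R} {a b : R}
    (hxy : LinearIndependent R ![x, y])
    (h : a • vecMulVec x (star x) = b • vecMulVec y (star y)) :
    a = 0 ∧ b = 0 := by
  have hx : star x ⬝ᵥ x ≠ 0 :=
    dotProduct_star_self_eq_zero.not.mpr (by simpa using hxy.ne_zero 0)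
  have hy : star y ⬝ᵥ y ≠ 0 :=
    dotProduct_star_self_eq_zero.not.mpr (by simpa using hxy.ne_zero 1)
  have happly (u : n → R) :
      (a * (star x ⬝ᵥ u)) • x + (-(b * (star y ⬝ᵥ u))) • y = 0 := by
    have := congrArg (· *ᵥ u) h
    simp only [smul_mulVec, vecMulVec_mulVec, op_smul_eq_smul, smul_smul] at this
    rw [neg_smul, ← sub_eq_add_neg, this, sub_self]
  have ha := (LinearIndependent.pair_iff.mp hxy _ _ (happly x)).1
  have hb := (LinearIndependent.pair_iff.mp hxy _ _ (happly y)).2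
  rw [neg_eq_zero] at hb
  exact ⟨(mul_eq_zero.mp ha).resolve_right hx, (mul_eq_zero.mp hb).resolve_right hy⟩

theorem dotProduct_eq_zero_of_vecMulVec_star_sub_eq {x y z w c : n → R} {a b : R}
    (hxy : LinearIndependent R ![x, y]) (hab : ¬(a = 0 ∧ b = 0))
    (h : vecMulVec z (star z) - vecMulVec w (star w)
        = a • vecMulVec x (star x) - b • vecMulVec y (star y))
    (hcx : c ⬝ᵥ x = 0) (hcy : c ⬝ᵥ y = 0) :
    c ⬝ᵥ z = 0 := by
  by_contra hcz
  have hsmul : (c ⬝ᵥ z) • star z = (c ⬝ᵥ w) • star w := by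
    simpa only [vecMul_sub, vecMul_smul, vecMul_vecMulVec, hcx, hcy, zero_smul, smul_zero,
      sub_self, sub_eq_zero] using congrArg (c ᵥ* ·) h
  have hnorm : star (c ⬝ᵥ z) * (c ⬝ᵥ z) = star (c ⬝ᵥ w) * (c ⬝ᵥ w) := by
    have := congrArg (· ⬝ᵥ star c) hsmul
    simp only [smul_dotProduct, star_dotProduct_star, smul_eq_mul] at this
    rwa [mul_comm, mul_comm (c ⬝ᵥ w)] at this
  rw [vecMulVec_star_eq_of_smul_star_eq hcz hsmul hnorm, sub_self, eq_comm, sub_eq_zero] at h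
  exact hab (eq_zero_of_smul_vecMulVec_star_eq hxy h)

end Matrix

open Matrix ComplexOrder

theorem stmt_3_general (d : ℕ) (x y z w : Fin d → ℂ) (lam mu : ℝ)
    (hxy : LinearIndependent ℂ ![x, y])
    (hne : ¬(lam = 0 ∧ mu = 0))
    (heq : vecMulVec z (star z) - vecMulVec w (star w)
        = (lam : ℂ) • vecMulVec x (star x) - (mu : ℂ) • vecMulVec y (star y)) :
    z ∈ Submodule.span ℂ ({x, y} : Set (Fin d → ℂ)) ∧
    w ∈ Submodule.span ℂ ({x, y} : Set (Fin d → ℂ)) := by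
  have hne_ℂ : ¬((lam : ℂ) = 0 ∧ (mu : ℂ) = 0) := by exact_mod_cast hne
  have heq_swap : vecMulVec w (star w) - vecMulVec z (star z)
      = (mu : ℂ) • vecMulVec y (star y) - (lam : ℂ) • vecMulVec x (star x) := by
    rw [← neg_sub, heq, neg_sub]
  refine ⟨mem_span_of_forall_dotProduct_eq_zero fun c hc => ?_,
    mem_span_of_forall_dotProduct_eq_zero fun c hc => ?_⟩
  · exact dotProduct_eq_zero_of_vecMulVec_star_sub_eq hxy hne_ℂ heq
      (hc x (by simp)) (hc y (by simp))
  · exact dotProduct_eq_zero_of_vecMulVec_star_sub_eq (LinearIndependent.pair_symm_iff.mp hxy)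
      (fun h => hne_ℂ h.symm) heq_swap (hc y (by simp)) (hc x (by simp))

theorem stmt_3 (d : ℕ) (x y z w : Fin d → ℂ) (lam mu : ℝ)
    (hxy : LinearIndependent ℂ ![x, y])
    (hlam : 0 ≤ lam) (hmu : 0 ≤ mu) (hne : ¬(lam = 0 ∧ mu = 0))
    (heq : vecMulVec z (star z) - vecMulVec w (star w)
        = (lam : ℂ) • vecMulVec x (star x) - (mu : ℂ) • vecMulVec y (star y)) :
    z ∈ Submodule.span ℂ ({x, y} : Set (Fin d → ℂ)) ∧
    w ∈ Submodule.span ℂ ({x, y} : Set (Fin d → ℂ)) :=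
  stmt_3_general d x y z w lam mu hxy hne heq
end

section
/- Let x, y ∈ ℂ^d be linearly independent and z = a x + b y, w = s x + t y with a, b, s, t ∈ ℂ. Then z z* - w w* = λ² x x* - μ² y y* (for λ, μ ≥ 0) if and only if |a|² - |s|² = λ², |t|² - |b|² = μ², and a·conj(b) = s·conj(t). -/
open Matrix

private lemma key5 (d : ℕ) (x y : Fin d → ℂ) (hxy : LinearIndependent ℂ ![x, y])
    (c1 c2 c3 c4 : ℂ)
    (h : ∀ i j : Fin d,
      c1 * (x i * star (x j)) + c2 * (x i * star (y j))
        + c3 * (y i * star (x j)) + c4 * (y i * star (y j)) = 0) :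
    c1 = 0 ∧ c2 = 0 ∧ c3 = 0 ∧ c4 = 0 := by
  rw [LinearIndependent.pair_iff] at hxy
  have hcol : ∀ j : Fin d,
      (c1 * star (x j) + c2 * star (y j)) = 0 ∧
      (c3 * star (x j) + c4 * star (y j)) = 0 := by
    intro j
    apply hxy
    funext i
    have := h i j
    simp only [Pi.add_apply, Pi.smul_apply, smul_eq_mul, Pi.zero_apply]
    linear_combination this
  have h12 : star c1 = 0 ∧ star c2 = 0 := by
    apply hxy
    funext j
    have := (hcol j).1
    have := congrArg star this
    simp only [star_add, star_mul', star_star, star_zero] at this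
    simp only [Pi.add_apply, Pi.smul_apply, smul_eq_mul, Pi.zero_apply]
    linear_combination this
  have h34 : star c3 = 0 ∧ star c4 = 0 := by
    apply hxy
    funext j
    have := (hcol j).2
    have := congrArg star this
    simp only [star_add, star_mul', star_star, star_zero] at this
    simp only [Pi.add_apply, Pi.smul_apply, smul_eq_mul, Pi.zero_apply]
    linear_combination this
  refine ⟨?_, ?_, ?_, ?_⟩
  · simpa using congrArg star h12.1
  · simpa using congrArg star h12.2
  · simpa using congrArg star h34.1
  · simpa using congrArg star h34.2

theorem stmt_5 (d : ℕ) (x y : Fin d → ℂ) (a b s t : ℂ) (lam mu : ℝ)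
    (hxy : LinearIndependent ℂ ![x, y])
    (hlam : 0 ≤ lam) (hmu : 0 ≤ mu)
    (z w : Fin d → ℂ) (hz : z = a • x + b • y) (hw : w = s • x + t • y) :
    (vecMulVec z (star z) - vecMulVec w (star w)
        = ((lam : ℂ) ^ 2) • vecMulVec x (star x)
          - ((mu : ℂ) ^ 2) • vecMulVec y (star y))
      ↔ (Complex.normSq a - Complex.normSq s = lam ^ 2 ∧
         Complex.normSq t - Complex.normSq b = mu ^ 2 ∧
         a * (starRingEnd ℂ) b = s * (starRingEnd ℂ) t) := by
  subst hz hw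
  constructor
  · intro hmat
    have hent : ∀ i j : Fin d,
        (a * x i + b * y i) * star (a * x j + b * y j)
          - (s * x i + t * y i) * star (s * x j + t * y j)
          = (lam : ℂ)^2 * (x i * star (x j)) - (mu : ℂ)^2 * (y i * star (y j)) := by
      intro i j
      have := congrFun (congrFun hmat i) j
      simpa [vecMulVec_apply, Matrix.sub_apply, Matrix.smul_apply, Pi.star_apply,
        Pi.add_apply, Pi.smul_apply, smul_eq_mul, mul_comm] using this
    have hk := key5 d x y hxy
      (a * star a - s * star s - (lam : ℂ)^2)
      (a * star b - s * star t)
      (b * star a - t * star s)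
      (b * star b - t * star t + (mu : ℂ)^2)
      (by
        intro i j
        have := hent i j
        simp only [star_add, star_mul'] at this
        linear_combination this)
    obtain ⟨e1, e2, e3, e4⟩ := hk
    simp only [Complex.star_def] at e1 e2 e3 e4
    refine ⟨?_, ?_, ?_⟩
    · have : ((Complex.normSq a - Complex.normSq s : ℝ) : ℂ) = ((lam^2 : ℝ) : ℂ) := by
        push_cast
        rw [← Complex.mul_conj, ← Complex.mul_conj]
        linear_combination e1
      exact_mod_cast this
    · have : ((Complex.normSq t - Complex.normSq b : ℝ) : ℂ) = ((mu^2 : ℝ) : ℂ) := by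
        push_cast
        rw [← Complex.mul_conj, ← Complex.mul_conj]
        linear_combination -e4
      exact_mod_cast this
    · exact sub_eq_zero.mp (by linear_combination e2)
  · rintro ⟨h1, h2, h3⟩
    have h1' : a * star a - s * star s = (lam : ℂ)^2 := by
      rw [Complex.star_def, Complex.mul_conj, Complex.mul_conj]
      exact_mod_cast congrArg (Complex.ofReal) h1
    have h2' : t * star t - b * star b = (mu : ℂ)^2 := by
      rw [Complex.star_def, Complex.mul_conj, Complex.mul_conj]
      exact_mod_cast congrArg (Complex.ofReal) h2
    have h3' : b * star a = t * star s := by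
      have := congrArg star h3
      simp only [star_mul', star_star, Complex.star_def, Complex.conj_conj] at this ⊢
      linear_combination this
    funext i j
    simp only [vecMulVec_apply, Matrix.sub_apply, Matrix.smul_apply, Pi.star_apply,
      Pi.add_apply, Pi.smul_apply, smul_eq_mul, star_add, star_mul', Complex.star_def]
    rw [Complex.star_def] at h1' h2' h3'
    linear_combination (x i * (starRingEnd ℂ) (x j)) * h1'
      - (y i * (starRingEnd ℂ) (y j)) * h2'
      + (x i * (starRingEnd ℂ) (y j)) * h3
      + (y i * (starRingEnd ℂ) (x j)) * h3'
end

section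
/- Let e_1, …, e_d be the standard basis of ℂ^d and define A₁ = e₁e₁ᵀ, A_j = e₁e_jᵀ + e_j e₁ᵀ and A_{d−1+j} = i e₁e_jᵀ − i e_j e₁ᵀ for j = 2, …, d. Suppose v, u ∈ ℂ^d satisfy Re(v* A_j u) = 0 for all j = 1, …, 2d−1, with v₁ ≠ 0 and u₁ ≠ 0. Then u = i c v for some real number c. -/
/-!
The constraints for `A_k` and `A_{d-1+k}` are the real and imaginary parts of one complex
equation, `conj v₁ * u_k = -(conj u₁ * v_k)`, and the constraint for `A₁` says that this
equation also holds for `k = 1`. Hence `u = (u₁ / v₁) • v`, and `u₁ / v₁` is purely imaginary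
because its real part is `Re (conj v₁ * u₁) / |v₁|²`.
-/

open ComplexConjugate

namespace Complex

lemma eq_neg_conj_of_re_eq_zero {z : ℂ} (h : z.re = 0) : z = -conj z :=
  ext (by simp [h]) (by simp)

lemma eq_I_mul_im_of_re_eq_zero {z : ℂ} (h : z.re = 0) : z = I * z.im :=
  ext (by simp [h]) (by simp)

lemma eq_neg_conj_of_re_add_eq_zero_of_re_I_mul_sub_eq_zero {z w : ℂ} (hre : (z + w).re = 0)
    (him : (I * z - I * w).re = 0) : z = -conj w := by
  simp only [add_re, sub_re, mul_re, I_re, I_im] at hre him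
  exact ext (by rw [neg_re, conj_re]; linarith) (by rw [neg_im, conj_im, neg_neg]; linarith)

lemma re_div_eq_zero_of_re_conj_mul_eq_zero {a b : ℂ} (h : (conj a * b).re = 0) :
    (b / a).re = 0 := by
  rw [div_eq_mul_inv, inv_def, ← mul_assoc, mul_comm b, re_mul_ofReal, h, zero_mul]

lemma eq_div_mul_of_conj_mul_eq_neg {a b x y : ℂ} (ha : a ≠ 0) (hab : (conj a * b).re = 0)
    (h : conj a * x = -(conj b * y)) : x = b / a * y := by
  have hca : conj a ≠ 0 := by simpa using ha
  calc x = -(conj b * y) / conj a := by rw [← h, mul_div_cancel_left₀ _ hca]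
    _ = -conj (b / a) * y := by rw [map_div₀]; ring
    _ = b / a * y := by
      rw [← eq_neg_conj_of_re_eq_zero (re_div_eq_zero_of_re_conj_mul_eq_zero hab)]

end Complex

theorem stmt_12_general (d : ℕ) (hd : 0 < d) (v u : Fin d → ℂ)
    (h1 : ((starRingEnd ℂ) (v ⟨0, hd⟩) * u ⟨0, hd⟩).re = 0)
    (h2 : ∀ k : Fin d, k ≠ ⟨0, hd⟩ →
      ((starRingEnd ℂ) (v ⟨0, hd⟩) * u k + (starRingEnd ℂ) (v k) * u ⟨0, hd⟩).re = 0)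
    (h3 : ∀ k : Fin d, k ≠ ⟨0, hd⟩ →
      (Complex.I * (starRingEnd ℂ) (v ⟨0, hd⟩) * u k
        - Complex.I * (starRingEnd ℂ) (v k) * u ⟨0, hd⟩).re = 0)
    (hv : v ⟨0, hd⟩ ≠ 0) :
    ∃ c : ℝ, u = (Complex.I * (c : ℂ)) • v := by
  set a := v ⟨0, hd⟩
  set b := u ⟨0, hd⟩
  have hconj : ∀ k, conj a * u k = -(conj b * v k) := by
    intro k
    by_cases hk : k = ⟨0, hd⟩
    · subst hk
      simpa [mul_comm] using Complex.eq_neg_conj_of_re_eq_zero h1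
    · simpa [mul_comm] using Complex.eq_neg_conj_of_re_add_eq_zero_of_re_I_mul_sub_eq_zero
        (h2 k hk) (by simpa only [mul_assoc] using h3 k hk)
  refine ⟨(b / a).im, funext fun k => ?_⟩
  rw [Pi.smul_apply, smul_eq_mul, ← Complex.eq_I_mul_im_of_re_eq_zero
    (Complex.re_div_eq_zero_of_re_conj_mul_eq_zero h1)]
  exact Complex.eq_div_mul_of_conj_mul_eq_neg hv h1 (hconj k)

theorem stmt_12 (d : ℕ) (hd : 0 < d) (v u : Fin d → ℂ)
    (h1 : ((starRingEnd ℂ) (v ⟨0, hd⟩) * u ⟨0, hd⟩).re = 0)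
    (h2 : ∀ k : Fin d, k ≠ ⟨0, hd⟩ →
      ((starRingEnd ℂ) (v ⟨0, hd⟩) * u k + (starRingEnd ℂ) (v k) * u ⟨0, hd⟩).re = 0)
    (h3 : ∀ k : Fin d, k ≠ ⟨0, hd⟩ →
      (Complex.I * (starRingEnd ℂ) (v ⟨0, hd⟩) * u k
        - Complex.I * (starRingEnd ℂ) (v k) * u ⟨0, hd⟩).re = 0)
    (hv : v ⟨0, hd⟩ ≠ 0) (hu : u ⟨0, hd⟩ ≠ 0) :
    ∃ c : ℝ, u = (Complex.I * (c : ℂ)) • v :=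
  stmt_12_general d hd v u h1 h2 h3 hv
end

section
/- Let f₁, …, f_N ∈ ℝ^d and suppose there exist I, J ⊆ {1,…,N} with I ∪ J = {1,…,N} such that V_I^⊥ + V_J^⊥ = ℝ^d, where V_K = span{f_j : j ∈ K}. Then for every u ∈ ℝ^d there exists v ∈ ℝ^d such that |⟨f_i, u⟩| = |⟨f_i, v⟩| for all i, obtained as follows: writing u = x + y with x ∈ V_I^⊥ and y ∈ V_J^⊥, the vector v = x − y satisfies ⟨f_i, u⟩ = ±⟨f_i, v⟩ for all i (with sign − for i ∈ J and + for i ∈ I... specifically ⟨f_i,u⟩ = ⟨f_i,v⟩ for i ∈ I and ⟨f_i,u⟩ = −⟨f_i,v⟩ for i ∈ J). -/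
open Submodule

section

variable {𝕜 E ι : Type*} [RCLike 𝕜] [NormedAddCommGroup E] [InnerProductSpace 𝕜 E]
  {f : ι → E} {K : Set ι} {i : ι}

lemma inner_add_eq_inner_sub_of_mem_orthogonal_span {x : E} (hx : x ∈ (span 𝕜 (f '' K))ᗮ)
    (hi : i ∈ K) (y : E) : inner 𝕜 (f i) (x + y) = inner 𝕜 (f i) (y - x) := by
  have hfx : inner 𝕜 (f i) x = 0 :=
    inner_right_of_mem_orthogonal (subset_span (Set.mem_image_of_mem f hi)) hx
  rw [inner_add_right, inner_sub_right, hfx, zero_add, sub_zero]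

lemma inner_add_eq_neg_inner_sub_of_mem_orthogonal_span {y : E} (hy : y ∈ (span 𝕜 (f '' K))ᗮ)
    (hi : i ∈ K) (x : E) : inner 𝕜 (f i) (x + y) = -inner 𝕜 (f i) (y - x) := by
  have hfy : inner 𝕜 (f i) y = 0 :=
    inner_right_of_mem_orthogonal (subset_span (Set.mem_image_of_mem f hi)) hy
  rw [inner_add_right, inner_sub_right, hfy, add_zero, zero_sub, neg_neg]

/-- Splitting `u = x + y` along `V_Iᗮ ⊔ V_Jᗮ`, the vector `y - x` has the same inner products
as `u` with the `f i`, `i ∈ I`, and the opposite ones with the `f i`, `i ∈ J`. -/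
lemma exists_inner_eq_and_inner_eq_neg_of_orthogonal_sup_eq_top {I J : Set ι}
    (hsum : (span 𝕜 (f '' I))ᗮ ⊔ (span 𝕜 (f '' J))ᗮ = ⊤) (u : E) :
    ∃ v : E, (∀ i ∈ I, inner 𝕜 (f i) u = inner 𝕜 (f i) v) ∧
      (∀ i ∈ J, inner 𝕜 (f i) u = -inner 𝕜 (f i) v) := by
  obtain ⟨x, hx, y, hy, rfl⟩ := mem_sup.mp (hsum ▸ mem_top : u ∈ _ ⊔ _)
  exact ⟨y - x, fun i hi => inner_add_eq_inner_sub_of_mem_orthogonal_span hx hi y,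
    fun i hi => inner_add_eq_neg_inner_sub_of_mem_orthogonal_span hy hi x⟩

end

theorem stmt_14 (d N : ℕ) (f : Fin N → EuclideanSpace ℝ (Fin d))
    (I J : Set (Fin N)) (hIJ : I ∪ J = Set.univ)
    (hsum : (Submodule.span ℝ (f '' I))ᗮ ⊔ (Submodule.span ℝ (f '' J))ᗮ = ⊤) :
    ∀ u : EuclideanSpace ℝ (Fin d), ∃ v : EuclideanSpace ℝ (Fin d),
      (∀ i ∈ I, inner ℝ (f i) u = (inner ℝ (f i) v : ℝ)) ∧
      (∀ i ∈ J, inner ℝ (f i) u = -(inner ℝ (f i) v : ℝ)) ∧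
      (∀ i, |(inner ℝ (f i) u : ℝ)| = |(inner ℝ (f i) v : ℝ)|) := by
  intro u
  obtain ⟨v, hI, hJ⟩ := exists_inner_eq_and_inner_eq_neg_of_orthogonal_sup_eq_top hsum u
  refine ⟨v, hI, hJ, fun i => ?_⟩
  rcases (hIJ.symm ▸ Set.mem_univ i : i ∈ I ∪ J) with hi | hi
  · rw [hI i hi]
  · rw [hJ i hi, abs_neg]
end
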